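/- arXiv:1508.06019 — 3 statements merged into one kernel-verified Lean document; each statement's English description precedes it below -/
import Mathlib

section
/- Let w : Fin n → ℤ be weights. If a = |{∑_{i∈X} w i : X ⊆ Fin n}| is the number of distinct subset sums and b = max over x ∈ ℤ of the number of subsets X ⊆ Fin n with ∑_{i∈X} w i = x, then there exist sets A, B ⊆ {0,1}^n (identifying subsets with indicator vectors) with |A| = a, |B| = b, and |A + B| = |A|·|B|, where addition is coordinatewise over ℤ. -/
/-!
Pick one subset for each attainable sum to form `A`, and let `B` be all subsets in a bin of
maximal size, i.e. all subsets with a fixed sum `x`. The linear form `v ↦ w ⬝ᵥ v` is injective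
on `A` and constant on `B`, so it reads `a` off `a + b` (as `w ⬝ᵥ (a + b) - x`), and then `b`
by cancellation.
-/

open Pointwise Finset

section IndicatorVec

variable {ι : Type*} [DecidableEq ι]

def indicatorVec (X : Finset ι) : ι → ℤ :=
  fun i => if i ∈ X then 1 else 0

theorem indicatorVec_apply_eq_zero_or_one (X : Finset ι) (i : ι) :
    indicatorVec X i = 0 ∨ indicatorVec X i = 1 := by
  unfold indicatorVec
  split_ifs <;> simp

theorem indicatorVec_injective : Function.Injective (indicatorVec (ι := ι)) := by
  intro X Y h
  ext i
  have hi := congrFun h i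
  unfold indicatorVec at hi
  split_ifs at hi <;> simp_all

theorem dotProduct_indicatorVec [Fintype ι] (w : ι → ℤ) (X : Finset ι) :
    w ⬝ᵥ indicatorVec X = ∑ i ∈ X, w i := by
  simp [dotProduct, indicatorVec, mul_ite, sum_ite_mem]

end IndicatorVec

theorem Finset.card_add_eq_mul_of_injOn_of_forall_eq {M N : Type*} [DecidableEq M]
    [Add M] [IsLeftCancelAdd M] [Add N] [IsRightCancelAdd N] (f : M →ₙ+ N)
    {A B : Finset M} {c : N} (hA : Set.InjOn f A) (hB : ∀ y ∈ B, f y = c) :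
    #(A + B) = #A * #B := by
  rw [card_add_iff]
  rintro ⟨a₁, b₁⟩ ⟨ha₁, hb₁⟩ ⟨a₂, b₂⟩ ⟨ha₂, hb₂⟩ (hsum : a₁ + b₁ = a₂ + b₂)
  have hf : f a₁ + c = f a₂ + c := by
    simpa only [map_add, hB b₁ hb₁, hB b₂ hb₂] using congrArg f hsum
  obtain rfl : a₁ = a₂ := hA ha₁ ha₂ (add_right_cancel hf)
  rw [add_left_cancel hsum]

theorem stmt1 {n : ℕ} (w : Fin n → ℤ) (a b : ℕ)
    (ha : a = ((Finset.univ : Finset (Finset (Fin n))).image (fun X => ∑ i ∈ X, w i)).card)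
    (hb : IsGreatest {m : ℕ | ∃ x : ℤ,
      m = ((Finset.univ : Finset (Finset (Fin n))).filter (fun X => ∑ i ∈ X, w i = x)).card} b) :
    ∃ A B : Finset (Fin n → ℤ),
      (∀ v ∈ A, ∀ i, v i = 0 ∨ v i = 1) ∧ (∀ v ∈ B, ∀ i, v i = 0 ∨ v i = 1) ∧
      A.card = a ∧ B.card = b ∧ (A + B).card = A.card * B.card := by
  obtain ⟨x, hx⟩ := hb.1
  obtain ⟨T, -, hT, hTsums⟩ := exists_subset_injOn_image_eq_of_surjOn Set.univ
    (univ.image fun X : Finset (Fin n) => ∑ i ∈ X, w i) (by rw [coe_image, coe_univ]; exact Set.surjOn_image _ _)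
  let φ : (Fin n → ℤ) →ₙ+ ℤ := ⟨(w ⬝ᵥ ·), dotProduct_add w⟩
  refine ⟨T.image indicatorVec, (univ.filter fun X => ∑ i ∈ X, w i = x).image indicatorVec,
    ?_, ?_, ?_, ?_, card_add_eq_mul_of_injOn_of_forall_eq φ (c := x) ?_ ?_⟩
  · simp [indicatorVec_apply_eq_zero_or_one]
  · simp [indicatorVec_apply_eq_zero_or_one]
  · rw [card_image_of_injective _ indicatorVec_injective, ha, ← hTsums, card_image_of_injOn hT]
  · rw [card_image_of_injective _ indicatorVec_injective, hx]
  · rw [coe_image]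
    rintro _ ⟨X, hX, rfl⟩ _ ⟨Y, hY, rfl⟩ hXY
    simp only [φ, AddHom.coe_mk, dotProduct_indicatorVec] at hXY
    rw [hT hX hY hXY]
  · simp [φ, dotProduct_indicatorVec]
end

section
/- For σ ∈ [0,1] fixed, the function g(σ,τ) = h(τσ/2, τσ/2 + (1−σ)/2, (1−σ)/2 + (1−τ)σ/2, (1−τ)σ/2) of τ ∈ [0,1] is maximized at τ = 1/2, where its value equals 1 + h(σ/2). -/
/-!
Write each entropy through `negMulLog x = -x log x`. The pairs of outer and of inner
coordinates of the distribution have the fixed sums `σ/2` and `1 - σ/2`, so by concavity of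
`negMulLog` the entropy only grows when each pair is replaced by two copies of its mean, which
is the distribution at `τ = 1/2`. Splitting every mass of `(σ/2, 1 - σ/2)` into two equal
halves adds exactly one bit of entropy.
-/

noncomputable def binEnt (x : ℝ) : ℝ := -x * Real.logb 2 x - (1 - x) * Real.logb 2 (1 - x)

noncomputable def ent4 (x₁ x₂ x₃ x₄ : ℝ) : ℝ :=
  -x₁ * Real.logb 2 x₁ - x₂ * Real.logb 2 x₂ - x₃ * Real.logb 2 x₃ - x₄ * Real.logb 2 x₄

noncomputable def g (σ τ : ℝ) : ℝ :=
  ent4 (τ*σ/2) (τ*σ/2 + (1-σ)/2) ((1-σ)/2 + (1-τ)*σ/2) ((1-τ)*σ/2)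

open Real

lemma ent4_eq_sum_negMulLog_div_log_two (x₁ x₂ x₃ x₄ : ℝ) :
    ent4 x₁ x₂ x₃ x₄ =
      (negMulLog x₁ + negMulLog x₂ + negMulLog x₃ + negMulLog x₄) / log 2 := by
  simp only [ent4, negMulLog, logb]
  ring

lemma binEnt_eq_sum_negMulLog_div_log_two (x : ℝ) :
    binEnt x = (negMulLog x + negMulLog (1 - x)) / log 2 := by
  simp only [binEnt, negMulLog, logb]
  ring

lemma negMulLog_add_le_two_mul_negMulLog_midpoint {a b : ℝ} (ha : 0 ≤ a) (hb : 0 ≤ b) :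
    negMulLog a + negMulLog b ≤ 2 * negMulLog ((a + b) / 2) := by
  have h := concaveOn_negMulLog.2 (Set.mem_Ici.2 ha) (Set.mem_Ici.2 hb)
    one_half_pos.le one_half_pos.le (add_halves 1)
  have hmid : 1 / 2 * a + 1 / 2 * b = (a + b) / 2 := by ring
  simp only [smul_eq_mul, hmid] at h
  linarith

lemma negMulLog_div_two (x : ℝ) : negMulLog (x / 2) = (negMulLog x + x * log 2) / 2 := by
  rw [div_eq_mul_inv, negMulLog_mul]
  simp only [negMulLog, log_inv]
  ring

lemma ent4_le_ent4_midpoints {a b c d : ℝ} (ha : 0 ≤ a) (hb : 0 ≤ b) (hc : 0 ≤ c) (hd : 0 ≤ d) :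
    ent4 a b c d ≤ ent4 ((a + d) / 2) ((b + c) / 2) ((b + c) / 2) ((a + d) / 2) := by
  simp only [ent4_eq_sum_negMulLog_div_log_two]
  refine div_le_div_of_nonneg_right ?_ (log_pos one_lt_two).le
  linarith [negMulLog_add_le_two_mul_negMulLog_midpoint ha hd,
    negMulLog_add_le_two_mul_negMulLog_midpoint hb hc]

lemma ent4_halves_eq_one_add_binEnt (a : ℝ) :
    ent4 (a / 2) ((1 - a) / 2) ((1 - a) / 2) (a / 2) = 1 + binEnt a := by
  have hlog2 : log 2 ≠ 0 := (log_pos one_lt_two).ne'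
  rw [ent4_eq_sum_negMulLog_div_log_two, binEnt_eq_sum_negMulLog_div_log_two,
    negMulLog_div_two, negMulLog_div_two]
  field_simp
  ring

theorem stmt5 (σ : ℝ) (hσ : σ ∈ Set.Icc (0 : ℝ) 1) :
    (∀ τ ∈ Set.Icc (0 : ℝ) 1, g σ τ ≤ g σ (1/2)) ∧
    g σ (1/2) = 1 + binEnt (σ/2) := by
  obtain ⟨hσ0, hσ1⟩ := hσ
  have g_half : g σ (1/2) = ent4 (σ/2/2) ((1 - σ/2)/2) ((1 - σ/2)/2) (σ/2/2) := by
    unfold g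
    congr 1 <;> ring
  refine ⟨fun τ ⟨hτ0, hτ1⟩ => ?_, g_half.trans (ent4_halves_eq_one_add_binEnt _)⟩
  refine (ent4_le_ent4_midpoints (by positivity) (by nlinarith) (by nlinarith)
    (by nlinarith)).trans_eq ?_
  rw [g_half]
  congr 1 <;> ring
end

section
/- Let w : Fin n → ℤ and let b : ℤ → ℕ count subsets of Fin n summing to each value. Then ∑_{r∈ℤ} b(r)² = ∑_{y ∈ {−1,0,1}^n, y·w = 0} 2^{|y⁻¹(0)|}, where y·w = ∑ᵢ yᵢ·wᵢ and y⁻¹(0) = {i : yᵢ = 0}. -/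
/-!
Sort pairs `(U, V)` of subsets by their common sum: the left side counts pairs with
`∑ U w = ∑ V w`. Such a pair is determined by the sign vector `y = 1_U - 1_V ∈ {-1, 0, 1}ⁿ`
together with `U ∩ V`, which can be any subset of `y⁻¹(0)`; and `∑ U w - ∑ V w = y · w`.
-/

open Finset

def binOf {n : ℕ} (w : Fin n → ℤ) (S : Finset (Fin n)) (x : ℤ) : ℕ :=
  (S.powerset.filter (fun X => ∑ i ∈ X, w i = x)).card

theorem finsum_sq_card_fiber {α β : Type*} [DecidableEq β] (s : Finset α) (f : α → β) :
    ∑ᶠ b, #{a ∈ s | f a = b} ^ 2 = #{p ∈ s ×ˢ s | f p.1 = f p.2} := by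
  have hsupp : (Function.support fun b => #{a ∈ s | f a = b} ^ 2) ⊆ s.image f := by
    intro b hb
    obtain ⟨a, ha⟩ := card_ne_zero.mp (pow_ne_zero_iff two_ne_zero |>.mp hb)
    rw [mem_filter] at ha
    exact mem_image.mpr ⟨a, ha.1, ha.2⟩
  rw [finsum_eq_sum_of_support_subset _ hsupp,
    card_eq_sum_card_fiberwise (f := fun p => f p.1) (t := s.image f)]
  · refine sum_congr rfl fun b _ => ?_
    rw [sq, ← card_product, filter_filter, ← filter_product]
    congr 1
    exact filter_congr fun p _ => by constructor <;> rintro ⟨h1, h2⟩ <;> simp_all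
  · intro p hp
    simp only [coe_filter, mem_product] at hp
    exact mem_image_of_mem f hp.1.1

def signVec {ι : Type*} [DecidableEq ι] (U V : Finset ι) (i : ι) : ℤ :=
  (if i ∈ U then 1 else 0) - (if i ∈ V then 1 else 0)

section SignVector

variable {ι : Type*} [Fintype ι] [DecidableEq ι]

lemma signVec_mem_piFinset (U V : Finset ι) :
    signVec U V ∈ Fintype.piFinset fun _ => ({-1, 0, 1} : Finset ℤ) := by
  rw [Fintype.mem_piFinset]
  intro i
  unfold signVec
  split_ifs <;> simp

lemma sum_signVec_mul (w : ι → ℤ) (U V : Finset ι) :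
    ∑ i, signVec U V i * w i = ∑ i ∈ U, w i - ∑ i ∈ V, w i := by
  simp only [signVec, sub_mul, sum_sub_distrib, ite_mul, one_mul, zero_mul, sum_ite_mem,
    univ_inter]

lemma inter_subset_filter_signVec_eq_zero (U V : Finset ι) :
    U ∩ V ⊆ univ.filter (fun i => signVec U V i = 0) := by
  intro i hi
  obtain ⟨hU, hV⟩ := mem_inter.mp hi
  rw [mem_filter]
  simp [signVec, hU, hV]

lemma inter_union_filter_signVec_eq_one (U V : Finset ι) :
    U ∩ V ∪ univ.filter (fun i => signVec U V i = 1) = U := by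
  ext i
  simp only [mem_union, mem_inter, mem_filter, mem_univ, true_and]
  by_cases hU : i ∈ U <;> by_cases hV : i ∈ V <;> simp [signVec, hU, hV]

lemma inter_union_filter_signVec_eq_neg_one (U V : Finset ι) :
    U ∩ V ∪ univ.filter (fun i => signVec U V i = -1) = V := by
  ext i
  simp only [mem_union, mem_inter, mem_filter, mem_univ, true_and]
  by_cases hU : i ∈ U <;> by_cases hV : i ∈ V <;> simp [signVec, hU, hV]

lemma signVec_union_filter {y : ι → ℤ} {Z : Finset ι}
    (hy : y ∈ Fintype.piFinset fun _ => ({-1, 0, 1} : Finset ℤ))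
    (hZ : Z ⊆ univ.filter (fun i => y i = 0)) :
    signVec (Z ∪ univ.filter (fun i => y i = 1)) (Z ∪ univ.filter (fun i => y i = -1)) = y := by
  funext i
  rw [Fintype.mem_piFinset] at hy
  by_cases hi : i ∈ Z
  · simp [signVec, hi, (mem_filter.mp (hZ hi)).2]
  · have := hy i
    simp only [mem_insert, mem_singleton] at this
    rcases this with h | h | h <;> simp [signVec, hi, h]

lemma union_filter_inter_union_filter (y : ι → ℤ) (Z : Finset ι) :
    (Z ∪ univ.filter (fun i => y i = 1)) ∩ (Z ∪ univ.filter (fun i => y i = -1)) = Z := by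
  rw [← union_inter_distrib_left, union_eq_left]
  intro i hi
  simp only [mem_inter, mem_filter] at hi
  grind

theorem card_filter_sum_eq_sum_eq_card_sigma (w : ι → ℤ) :
    #{p : Finset ι × Finset ι | ∑ i ∈ p.1, w i = ∑ i ∈ p.2, w i} =
      #({y ∈ Fintype.piFinset (fun _ : ι => ({-1, 0, 1} : Finset ℤ)) |
          ∑ i, y i * w i = 0}.sigma fun y => (univ.filter fun i => y i = 0).powerset) := by
  refine card_nbij' (fun p => ⟨signVec p.1 p.2, p.1 ∩ p.2⟩)
    (fun q => (q.2 ∪ univ.filter (fun i => q.1 i = 1), q.2 ∪ univ.filter (fun i => q.1 i = -1)))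
    ?_ ?_ ?_ ?_
  · rintro ⟨U, V⟩ h
    simp only [mem_coe, mem_filter, mem_univ, true_and] at h
    simp only [coe_sigma, Set.mem_sigma_iff, mem_coe, mem_filter, mem_powerset]
    exact ⟨⟨signVec_mem_piFinset U V, by rw [sum_signVec_mul, h, sub_self]⟩,
      inter_subset_filter_signVec_eq_zero U V⟩
  · rintro ⟨y, Z⟩ h
    simp only [coe_sigma, Set.mem_sigma_iff, mem_coe, mem_filter, mem_powerset] at h
    obtain ⟨⟨hy, hyw⟩, hZ⟩ := h
    simp only [mem_coe, mem_filter, mem_univ, true_and]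
    rw [← sub_eq_zero, ← sum_signVec_mul, signVec_union_filter hy hZ, hyw]
  · rintro ⟨U, V⟩ -
    simp only [inter_union_filter_signVec_eq_one, inter_union_filter_signVec_eq_neg_one]
  · rintro ⟨y, Z⟩ h
    simp only [coe_sigma, Set.mem_sigma_iff, mem_coe, mem_filter, mem_powerset] at h
    exact Sigma.ext (signVec_union_filter h.1.1 h.2)
      (heq_of_eq (union_filter_inter_union_filter y Z))

theorem sum_piFinset_ite_eq_card_sigma (w : ι → ℤ) :
    ∑ y ∈ Fintype.piFinset (fun _ : ι => ({-1, 0, 1} : Finset ℤ)),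
      (if ∑ i, y i * w i = 0 then 2 ^ #(univ.filter fun i => y i = 0) else 0) =
      #({y ∈ Fintype.piFinset (fun _ : ι => ({-1, 0, 1} : Finset ℤ)) |
          ∑ i, y i * w i = 0}.sigma fun y => (univ.filter fun i => y i = 0).powerset) := by
  simp only [card_sigma, card_powerset, sum_filter]

end SignVector

theorem stmt7 {n : ℕ} (w : Fin n → ℤ) :
    ∑ᶠ r : ℤ, (binOf w Finset.univ r)^2 =
    ∑ y ∈ Fintype.piFinset (fun _ : Fin n => ({-1, 0, 1} : Finset ℤ)),
      (if ∑ i, y i * w i = 0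
        then 2 ^ ((Finset.univ.filter (fun i => y i = 0)).card) else 0) := by
  rw [sum_piFinset_ite_eq_card_sigma, ← card_filter_sum_eq_sum_eq_card_sigma]
  unfold binOf
  rw [finsum_sq_card_fiber, powerset_univ, univ_product_univ]
end
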